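/- arXiv:1504.07825 — 4 statements merged into one kernel-verified Lean document; each statement's English description precedes it below -/
import Mathlib

section
/- Let H and (H_j)_{j=1}^n be mutually independent random variables, each exponentially distributed with rate 1. Let R > 0, T > 0, α > 0 and r_1, ..., r_n > 0 with n ≥ 1. Then the probability that H · R^{-α} / (Σ_{j=1}^n H_j · r_j^{-α}) ≥ T equals ∏_{j=1}^n 1/(1 + T · (R/r_j)^α). -/
open MeasureTheory ProbabilityTheory Real Set

/-!
Conditionally on the interferers, the link succeeds iff `H ≥ ∑ j, c j * H' j` with
`c j = T * (R / r j) ^ α`, and the exponential tail turns this conditional probability into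
`exp (-∑ j, c j * H' j)`. Its expectation factorises by independence into the Laplace transforms
`E[exp (-c * H')] = 1 / (1 + c)` of the rate-one exponential law.
-/

namespace ProbabilityTheory

lemma measurable_exponentialPDF (r : ℝ) : Measurable (exponentialPDF r) :=
  (measurable_exponentialPDFReal r).ennreal_ofReal

variable {r : ℝ}

instance nullSingletonClass_expMeasure : NullSingletonClass (expMeasure r) :=
  inferInstanceAs (NullSingletonClass (volume.withDensity _))

lemma expMeasure_Ici (hr : 0 < r) {c : ℝ} (hc : 0 ≤ c) :
    expMeasure r (Ici c) = ENNReal.ofReal (exp (-(r * c))) := by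
  have := isProbabilityMeasure_expMeasure hr
  have hexp : exp (-(r * c)) ≤ 1 := exp_le_one_iff.2 (neg_nonpos.2 (mul_nonneg hr.le hc))
  rw [measure_congr Ioi_ae_eq_Ici.symm, ← compl_Iic, prob_compl_eq_one_sub measurableSet_Iic,
    ← ofReal_cdf, cdf_expMeasure_eq hr, if_pos hc, ← ENNReal.ofReal_one,
    ← ENNReal.ofReal_sub _ (sub_nonneg.2 hexp), sub_sub_cancel]

lemma ae_pos_expMeasure (hr : 0 < r) : ∀ᵐ x ∂expMeasure r, 0 < x := by
  have := isProbabilityMeasure_expMeasure hr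
  simp only [ae_iff, not_lt]
  change expMeasure r (Iic 0) = 0
  rw [← ofReal_cdf, cdf_expMeasure_eq hr, if_pos le_rfl, mul_zero, neg_zero, exp_zero, sub_self,
    ENNReal.ofReal_zero]

lemma ae_pos_pi_expMeasure {ι : Type*} [Fintype ι] {rate : ι → ℝ} (hrate : ∀ j, 0 < rate j) :
    ∀ᵐ y ∂Measure.pi (fun j => expMeasure (rate j)), ∀ j, 0 < y j := by
  have := fun j => isProbabilityMeasure_expMeasure (hrate j)
  exact ae_all_iff.2 fun j => Measure.tendsto_eval_ae_ae.eventually (ae_pos_expMeasure (hrate j))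

lemma exp_neg_mul_mul_exponentialPDF {s : ℝ} (hr : 0 < r) (hs : 0 ≤ s) (x : ℝ) :
    ENNReal.ofReal (exp (-(s * x))) * exponentialPDF r x
      = ENNReal.ofReal (r / (r + s)) * exponentialPDF (r + s) x := by
  rcases lt_or_ge x 0 with hx | hx
  · simp [exponentialPDF_of_neg hx]
  · rw [exponentialPDF_of_nonneg hx, exponentialPDF_of_nonneg hx,
      ← ENNReal.ofReal_mul (by positivity), ← ENNReal.ofReal_mul (by positivity)]
    congr 1
    have : r + s ≠ 0 := by positivity
    field_simp
    rw [← exp_add]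
    ring_nf

lemma lintegral_exp_neg_mul_expMeasure {s : ℝ} (hr : 0 < r) (hs : 0 ≤ s) :
    ∫⁻ x, ENNReal.ofReal (exp (-(s * x))) ∂expMeasure r = ENNReal.ofReal (r / (r + s)) := by
  rw [show expMeasure r = volume.withDensity (exponentialPDF r) from rfl,
    lintegral_withDensity_eq_lintegral_mul _ (measurable_exponentialPDF r) (by fun_prop)]
  simp_rw [Pi.mul_apply, mul_comm (exponentialPDF r _), exp_neg_mul_mul_exponentialPDF hr hs]
  rw [lintegral_const_mul _ (measurable_exponentialPDF _),
    lintegral_exponentialPDF_eq_one (by linarith), mul_one]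

lemma lintegral_fintype_prod_eq_prod {ι : Type*} [Fintype ι] {α : ι → Type*}
    [∀ i, MeasurableSpace (α i)] {μ : ∀ i, Measure (α i)} [∀ i, IsProbabilityMeasure (μ i)]
    {f : ∀ i, α i → ENNReal} (hf : ∀ i, Measurable (f i)) :
    ∫⁻ y, ∏ i, f i (y i) ∂Measure.pi μ = ∏ i, ∫⁻ x, f i x ∂μ i := by
  rw [lintegral_prod_eq_prod_lintegral_of_indepFun _ _
    (iIndepFun_pi fun i => (hf i).aemeasurable) fun i => (hf i).comp (measurable_pi_apply i)]
  exact Finset.prod_congr rfl fun i _ => (measurePreserving_eval μ i).lintegral_comp (hf i)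

lemma lintegral_exp_neg_sum_pi_expMeasure {ι : Type*} [Fintype ι] {rate c : ι → ℝ}
    (hrate : ∀ j, 0 < rate j) (hc : ∀ j, 0 ≤ c j) :
    ∫⁻ y, ENNReal.ofReal (exp (-∑ j, c j * y j)) ∂Measure.pi (fun j => expMeasure (rate j))
      = ∏ j, ENNReal.ofReal (rate j / (rate j + c j)) := by
  have := fun j => isProbabilityMeasure_expMeasure (hrate j)
  simp_rw [← Finset.sum_neg_distrib, exp_sum,
    ENNReal.ofReal_prod_of_nonneg fun j _ => (exp_pos _).le]
  rw [lintegral_fintype_prod_eq_prod (f := fun j x => ENNReal.ofReal (exp (-(c j * x))))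
    fun j => by fun_prop]
  exact Finset.prod_congr rfl fun j _ => lintegral_exp_neg_mul_expMeasure (hrate j) (hc j)

lemma expMeasure_prod_setOf_le {β : Type*} [MeasurableSpace β] {ν : Measure β} [SFinite ν]
    (hr : 0 < r) {f : β → ℝ} (hf : Measurable f) (hf₀ : ∀ᵐ y ∂ν, 0 ≤ f y) :
    (expMeasure r).prod ν {p | f p.2 ≤ p.1} = ∫⁻ y, ENNReal.ofReal (exp (-(r * f y))) ∂ν := by
  have := isProbabilityMeasure_expMeasure hr
  rw [Measure.prod_apply_symm (measurableSet_le (by fun_prop) measurable_fst)]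
  refine lintegral_congr_ae ?_
  filter_upwards [hf₀] with y hy
  exact expMeasure_Ici hr hy

lemma iIndepFun.map_prodMk_eq_prod_pi {Ω : Type*} [MeasurableSpace Ω] {μ : Measure Ω}
    {n : ℕ} {β : Type*} [MeasurableSpace β] {X : Ω → β} {Y : Fin n → Ω → β}
    (h : iIndepFun (Fin.cons X Y : Fin (n + 1) → Ω → β) μ) (hX : AEMeasurable X μ)
    (hY : ∀ j, AEMeasurable (Y j) μ) :
    μ.map (fun ω => (X ω, fun j => Y j ω))
      = (μ.map X).prod (Measure.pi fun j => μ.map (Y j)) := by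
  have := h.isProbabilityMeasure
  have hcons : ∀ i, AEMeasurable ((Fin.cons X Y : Fin (n + 1) → Ω → β) i) μ := Fin.cases hX hY
  have hsplit : (fun ω => (X ω, fun j => Y j ω)) = MeasurableEquiv.piFinSuccAbove (fun _ => β) 0 ∘
      fun ω i => (Fin.cons X Y : Fin (n + 1) → Ω → β) i ω := by
    ext ω <;> simp [MeasurableEquiv.piFinSuccAbove, Fin.tail]
  rw [hsplit, ← AEMeasurable.map_map_of_aemeasurable (MeasurableEquiv.measurable _).aemeasurable
    (aemeasurable_pi_lambda _ hcons), h.map_fun_eq_pi_map hcons,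
    (measurePreserving_piFinSuccAbove _ 0).map_eq]
  simp

end ProbabilityTheory

lemma le_sir_iff {ι : Type*} [Fintype ι] {R T α h : ℝ} {r x : ι → ℝ} (hR : 0 < R)
    (hr : ∀ j, 0 ≤ r j) (hsum : 0 < ∑ j, x j * r j ^ (-α)) :
    T ≤ h * R ^ (-α) / ∑ j, x j * r j ^ (-α) ↔ ∑ j, T * (R / r j) ^ α * x j ≤ h := by
  have hlin : ∑ j, T * (R / r j) ^ α * x j = T * (R ^ α * ∑ j, x j * r j ^ (-α)) := by
    rw [Finset.mul_sum, Finset.mul_sum]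
    refine Finset.sum_congr rfl fun j _ => ?_
    rw [div_rpow hR.le (hr j), rpow_neg (hr j), div_eq_mul_inv]
    ring
  rw [rpow_neg hR.le, ← div_eq_mul_inv, div_div,
    le_div_iff₀ (mul_pos (rpow_pos_of_pos hR α) hsum), hlin]

theorem prob_sir_ge_threshold_general
    {Ω : Type*} [MeasurableSpace Ω] (μ : Measure Ω)
    (n : ℕ) (hn : 1 ≤ n) (H : Ω → ℝ) (H' : Fin n → Ω → ℝ)
    (R T α : ℝ) (hR : 0 < R) (hT : 0 < T)
    (r : Fin n → ℝ) (hr : ∀ j, 0 < r j)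
    (hindep : iIndepFun (Fin.cons H H' : Fin (n + 1) → Ω → ℝ) μ)
    (hH : μ.map H = expMeasure 1)
    (hH' : ∀ j, μ.map (H' j) = expMeasure 1) :
    μ {ω | H ω * R ^ (-α) / (∑ j, H' j ω * (r j) ^ (-α)) ≥ T}
      = ENNReal.ofReal (∏ j, 1 / (1 + T * (R / r j) ^ α)) := by
  have : IsProbabilityMeasure (expMeasure 1) := isProbabilityMeasure_expMeasure one_pos
  have hmeas : ∀ {X : Ω → ℝ}, μ.map X = expMeasure 1 → AEMeasurable X μ := fun hX =>
    .of_map_ne_zero (hX ▸ IsProbabilityMeasure.ne_zero _)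
  have hmeas' : AEMeasurable (fun ω => (H ω, fun j => H' j ω)) μ :=
    (hmeas hH).prodMk (aemeasurable_pi_lambda _ fun j => hmeas (hH' j))
  set c : Fin n → ℝ := fun j => T * (R / r j) ^ α
  have hc : ∀ j, 0 ≤ c j := fun j => mul_nonneg hT.le (rpow_nonneg (div_pos hR (hr j)).le _)
  have hevent : {ω | H ω * R ^ (-α) / (∑ j, H' j ω * (r j) ^ (-α)) ≥ T}
      =ᵐ[μ] (fun ω => (H ω, fun j => H' j ω)) ⁻¹' {p | ∑ j, c j * p.2 j ≤ p.1} := by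
    filter_upwards [ae_all_iff.2 fun j => ae_of_ae_map (hmeas (hH' j))
      ((hH' j).symm ▸ ae_pos_expMeasure one_pos)] with ω hω
    exact propext <| le_sir_iff hR (fun j => (hr j).le) <| Finset.sum_pos
      (fun j _ => mul_pos (hω j) (rpow_pos_of_pos (hr j) _)) ⟨⟨0, hn⟩, Finset.mem_univ _⟩
  rw [measure_congr hevent, ← Measure.map_apply_of_aemeasurable hmeas'
      (measurableSet_le (by fun_prop) measurable_fst),
    hindep.map_prodMk_eq_prod_pi (hmeas hH) fun j => hmeas (hH' j), hH]
  simp_rw [hH']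
  rw [expMeasure_prod_setOf_le (f := fun y : Fin n → ℝ => ∑ j, c j * y j) one_pos (by fun_prop)
    ((ae_pos_pi_expMeasure fun _ => one_pos).mono fun y hy =>
      Finset.sum_nonneg fun j _ => mul_nonneg (hc j) (hy j).le)]
  simp_rw [one_mul]
  rw [lintegral_exp_neg_sum_pi_expMeasure (fun _ => one_pos) hc,
    ENNReal.ofReal_prod_of_nonneg fun j _ => one_div_nonneg.2 (add_nonneg zero_le_one (hc j))]

/-- SIR success probability under Rayleigh fading: if `H` and `H' 1, ..., H' n` are
mutually independent rate-1 exponential random variables, `R, T, α > 0`, `r j > 0` and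
`n ≥ 1`, then `P( H * R^(-α) / (∑ j, H' j * r j^(-α)) ≥ T ) = ∏ j, 1 / (1 + T * (R / r j)^α)`. -/
theorem prob_sir_ge_threshold
    {Ω : Type*} [MeasurableSpace Ω] (μ : Measure Ω) [IsProbabilityMeasure μ]
    (n : ℕ) (hn : 1 ≤ n) (H : Ω → ℝ) (H' : Fin n → Ω → ℝ)
    (R T α : ℝ) (hR : 0 < R) (hT : 0 < T) (hα : 0 < α)
    (r : Fin n → ℝ) (hr : ∀ j, 0 < r j)
    (hindep : iIndepFun (Fin.cons H H' : Fin (n + 1) → Ω → ℝ) μ)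
    (hH : μ.map H = expMeasure 1)
    (hH' : ∀ j, μ.map (H' j) = expMeasure 1) :
    μ {ω | H ω * R ^ (-α) / (∑ j, H' j ω * (r j) ^ (-α)) ≥ T}
      = ENNReal.ofReal (∏ j, 1 / (1 + T * (R / r j) ^ α)) :=
  prob_sir_ge_threshold_general μ n hn H H' R T α hR hT r hr hindep hH hH'
end

section
/- Let V be a finite set, f : V → V → ℝ symmetric (f i j = f j i for all i, j), b : V → ℝ, and for i ∈ V, M ⊆ V define μ_i(M) = ∏_{j ∈ M \ {i}} f i j and the weight W(M) = Σ_{i ∈ M} μ_i(M) · b_i. Fix i ∈ V and M ⊆ V, and define the inactive weights w_j⁰ = b_j · μ_j(M \ {i}) and active weights w_j¹ = w_j⁰ · f i j for all j ∈ M \ {i}, and w_i¹ = b_i · μ_i(M ∪ {i}). Then exp(w_i¹) / ( exp( Σ_{j ∈ M \ {i}} (w_j⁰ − w_j¹) ) + exp(w_i¹) ) = exp(W(M ∪ {i})) / ( exp(W(M ∪ {i})) + exp(W(M \ {i})) ). -/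
open Finset Real

lemma csma_key (a c A C : ℝ) (h : c - a = C - A) :
    exp a / (exp c + exp a) = exp A / (exp A + exp C) := by
  rw [div_eq_div_iff (by positivity) (by positivity)]
  have h3 : a + C = A + c := by linarith
  rw [mul_add, mul_add, ← exp_add a A, ← exp_add a C, ← exp_add A c, ← exp_add A a, h3,
    add_comm a A]
  exact add_comm _ _

/-- The Spatial CSMA update probability computed from the inactive/active weights equals
the Glauber-dynamics conditional probability for the Gibbs measure `Π(M) ∝ exp(W M)`,
where `μ i M = ∏_{j ∈ M \ {i}} f i j` and `W M = ∑_{i ∈ M} μ i M * b i`. -/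
theorem spatialCSMA_update_prob_eq_glauber
    {V : Type*} [DecidableEq V] (f : V → V → ℝ) (b : V → ℝ)
    (hf : ∀ i j, f i j = f j i) (i : V) (M : Finset V)
    (μ : V → Finset V → ℝ) (hμ : ∀ k S, μ k S = ∏ j ∈ S.erase k, f k j)
    (W : Finset V → ℝ) (hW : ∀ S, W S = ∑ k ∈ S, μ k S * b k)
    (w0 w1 : V → ℝ) (wi1 : ℝ)
    (hw0 : ∀ j ∈ M.erase i, w0 j = b j * μ j (M.erase i))
    (hw1 : ∀ j ∈ M.erase i, w1 j = w0 j * f i j)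
    (hwi1 : wi1 = b i * μ i (insert i M)) :
    exp wi1 / (exp (∑ j ∈ M.erase i, (w0 j - w1 j)) + exp wi1)
      = exp (W (insert i M)) / (exp (W (insert i M)) + exp (W (M.erase i))) := by
  have hE : i ∉ M.erase i := notMem_erase _ _
  have hins : (insert i M) = insert i (M.erase i) := by
    ext x; simp only [mem_insert, mem_erase]; tauto
  have hWE : W (M.erase i) = ∑ j ∈ M.erase i, w0 j := by
    rw [hW]
    refine sum_congr rfl fun j hj => ?_
    rw [hw0 j hj]; ring
  have hWI : W (insert i M) = wi1 + ∑ j ∈ M.erase i, w1 j := by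
    have hsum : ∑ j ∈ M.erase i, μ j (insert i (M.erase i)) * b j
        = ∑ j ∈ M.erase i, w1 j := by
      refine sum_congr rfl fun j hj => ?_
      have hji : j ≠ i := (mem_erase.mp hj).1
      have hnot : i ∉ (M.erase i).erase j := fun h => hE (mem_of_mem_erase h)
      rw [hw1 j hj, hw0 j hj, hμ j (insert i (M.erase i)), hμ j (M.erase i),
        Finset.erase_insert_of_ne hji.symm,
        prod_insert hnot, hf i j]
      ring
    rw [hW, hins, sum_insert hE, hwi1, hins, hsum]
    ring
  apply csma_key
  rw [hWE, hWI, sum_sub_distrib]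
  ring
end

section
/- Let V be a nonempty finite set, f : V → V → ℝ symmetric (f i j = f j i), and b : V → ℝ. For i ∈ V and M ⊆ V define μ_i(M) = ∏_{j ∈ M \ {i}} f i j, W(M) = Σ_{i ∈ M} μ_i(M) · b_i, and Π(M) = exp(W(M)) / Z with Z = Σ_{M' ⊆ V} exp(W(M')). For i ∈ V and M ⊆ V let p_i(M) = exp(w_i¹) / ( exp( Σ_{j ∈ M \ {i}} (w_j⁰ − w_j¹) ) + exp(w_i¹) ), where w_j⁰ = b_j · μ_j(M \ {i}), w_j¹ = w_j⁰ · f i j, and w_i¹ = b_i · μ_i(M ∪ {i}). Define the single-site Glauber transition kernel on subsets of V by K(M, M') = (1/|V|) · Σ_{i ∈ V : M' \ {i} = M \ {i}} q_i(M, M'), where q_i(M, M') = p_i(M) if i ∈ M' and q_i(M, M') = 1 − p_i(M) if i ∉ M'. Then Π is a stationary distribution of this kernel: for every M' ⊆ V, Σ_{M ⊆ V} Π(M) · K(M, M') = Π(M'). -/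
open Finset Real

/-! The update rule is the heat-bath rule for the Gibbs weights `exp (W M)`: adding link `i` to
`A ∌ i` multiplies the weight by `exp (w_i¹ - Σ_{j ∈ A} (w_j⁰ - w_j¹))`, and `p_i` is the
logistic function of that log-ratio. Hence each single-site move satisfies
detailed balance, and a reversible kernel with unit row sums fixes its reversing measure. -/

theorem sum_mul_eq_of_detailed_balance {α R : Type*} [Fintype α] [CommSemiring R]
    {ρ : α → R} {K : α → α → R} (hdb : ∀ x y, ρ x * K x y = ρ y * K y x)
    (hK : ∀ x, ∑ y, K x y = 1) (y : α) :
    ∑ x, ρ x * K x y = ρ y := by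
  simp_rw [hdb _ y, ← mul_sum, hK, mul_one]

theorem Finset.eq_erase_or_eq_insert_erase {V : Type*} [DecidableEq V] (N : Finset V) (i : V) :
    N = N.erase i ∨ N = insert i (N.erase i) := by
  by_cases hN : i ∈ N
  · exact Or.inr (insert_erase hN).symm
  · exact Or.inl (erase_eq_of_notMem hN).symm

section Glauber

variable {V R : Type*} [DecidableEq V] [Field R]

/-- Pick a site `i` uniformly and make it present with probability `p i M`. -/
def glauberKernel [Fintype V] (p : V → Finset V → R) (M M' : Finset V) : R :=
  (1 / (Fintype.card V : R)) *
    ∑ i ∈ univ.filter (fun i : V => M'.erase i = M.erase i),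
      (if i ∈ M' then p i M else 1 - p i M)

theorem sum_ite_erase_eq [Fintype V] {S : Type*} [AddCommMonoid S] (g : Finset V → S)
    (M : Finset V) (i : V) :
    ∑ M' : Finset V, (if M'.erase i = M.erase i then g M' else 0) =
      g (M.erase i) + g (insert i (M.erase i)) := by
  have hi : i ∉ M.erase i := notMem_erase i M
  have hfilter : univ.filter (fun M' : Finset V => M'.erase i = M.erase i) =
      {M.erase i, insert i (M.erase i)} := by
    ext M'
    simp only [mem_filter, mem_univ, true_and, mem_insert, mem_singleton]
    refine ⟨fun h => h ▸ eq_erase_or_eq_insert_erase M' i, ?_⟩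
    rintro (rfl | rfl)
    · exact erase_eq_of_notMem hi
    · exact erase_insert hi
  rw [← sum_filter, hfilter, sum_pair (ne_insert_of_notMem _ _ hi)]

theorem sum_glauberKernel [Fintype V] [Nonempty V] [CharZero R] (p : V → Finset V → R)
    (M : Finset V) :
    ∑ M', glauberKernel p M M' = 1 := by
  have hsite : ∀ i : V, ∑ M' : Finset V,
      (if M'.erase i = M.erase i then (if i ∈ M' then p i M else 1 - p i M) else 0) = 1 := by
    intro i
    rw [sum_ite_erase_eq (fun M' => if i ∈ M' then p i M else 1 - p i M),
      if_neg (notMem_erase i M), if_pos (mem_insert_self i _)]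
    ring
  simp_rw [glauberKernel, ← mul_sum, sum_filter]
  rw [sum_comm, sum_congr rfl fun i _ => hsite i, sum_const, card_univ, nsmul_one]
  exact one_div_mul_cancel (Nat.cast_ne_zero.mpr Fintype.card_ne_zero)

variable {ρ : Finset V → R} {p : V → Finset V → R}

theorem glauber_site_balance
    (hflip : ∀ i A, i ∉ A → ρ A * p i A = ρ (insert i A) * (1 - p i (insert i A)))
    {i : V} {M M' : Finset V} (h : M'.erase i = M.erase i) :
    ρ M * (if i ∈ M' then p i M else 1 - p i M) =
      ρ M' * (if i ∈ M then p i M' else 1 - p i M') := by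
  obtain ⟨A, hi, hM, hM'⟩ :
      ∃ A, i ∉ A ∧ (M = A ∨ M = insert i A) ∧ (M' = A ∨ M' = insert i A) :=
    ⟨M.erase i, notMem_erase i M, eq_erase_or_eq_insert_erase M i,
      h ▸ eq_erase_or_eq_insert_erase M' i⟩
  rcases hM with rfl | rfl <;> rcases hM' with rfl | rfl <;>
    simp [hi, hflip _ _ hi]

theorem glauberKernel_detailed_balance [Fintype V]
    (hflip : ∀ i A, i ∉ A → ρ A * p i A = ρ (insert i A) * (1 - p i (insert i A)))
    (M M' : Finset V) :
    ρ M * glauberKernel p M M' = ρ M' * glauberKernel p M' M := by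
  simp only [glauberKernel, mul_left_comm (ρ _), mul_sum, sum_filter]
  refine sum_congr rfl fun i _ => ?_
  by_cases h : M'.erase i = M.erase i
  · rw [if_pos h, if_pos h.symm, glauber_site_balance hflip h]
  · simp only [if_neg h, if_neg (Ne.symm h), mul_zero]

theorem glauberKernel_stationary [Fintype V] [Nonempty V] [CharZero R]
    (hflip : ∀ i A, i ∉ A → ρ A * p i A = ρ (insert i A) * (1 - p i (insert i A)))
    (M' : Finset V) :
    ∑ M, ρ M * glauberKernel p M M' = ρ M' :=
  sum_mul_eq_of_detailed_balance (glauberKernel_detailed_balance hflip) (sum_glauberKernel p) M'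

end Glauber

theorem exp_mul_logistic {x y u v : ℝ} (h : x + u = y + v) :
    exp x * (exp u / (exp v + exp u)) = exp y * (1 - exp u / (exp v + exp u)) := by
  have hexp : exp x * exp u = exp y * exp v := by rw [← exp_add, ← exp_add, h]
  field_simp
  linear_combination hexp

section SpatialCSMA

variable {V : Type*} [DecidableEq V] (f : V → V → ℝ) (b : V → ℝ)

def successProb (k : V) (S : Finset V) : ℝ := ∏ j ∈ S.erase k, f k j

def totalWeight (S : Finset V) : ℝ := ∑ k ∈ S, successProb f k S * b k

/-- `w_i¹ = b i * μ i (M ∪ {i})`; `w_j⁰ - w_j¹` is the weight link `j` loses when `i` turns on. -/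
noncomputable def updateProb (i : V) (M : Finset V) : ℝ :=
  exp (b i * successProb f i (insert i M)) /
    (exp (∑ j ∈ M.erase i,
        (b j * successProb f j (M.erase i) - b j * successProb f j (M.erase i) * f i j)) +
      exp (b i * successProb f i (insert i M)))

variable {f}

theorem successProb_insert (hf : ∀ i j, f i j = f j i) {i j : V} {A : Finset V}
    (hi : i ∉ A) (hj : j ∈ A) :
    successProb f j (insert i A) = f i j * successProb f j A := by
  have hji : j ≠ i := ne_of_mem_of_not_mem hj hi
  rw [successProb, erase_insert_of_ne hji.symm,
    prod_insert fun h => hi (mem_of_mem_erase h), hf j i, successProb]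

theorem totalWeight_insert (hf : ∀ i j, f i j = f j i) {i : V} {A : Finset V} (hi : i ∉ A) :
    totalWeight f b A + b i * successProb f i (insert i A) =
      totalWeight f b (insert i A) +
        ∑ j ∈ A, (b j * successProb f j A - b j * successProb f j A * f i j) := by
  have hins : ∑ j ∈ A, successProb f j (insert i A) * b j =
      ∑ j ∈ A, b j * successProb f j A * f i j :=
    sum_congr rfl fun j hj => by rw [successProb_insert hf hi hj]; ring
  have hcomm : ∑ j ∈ A, successProb f j A * b j = ∑ j ∈ A, b j * successProb f j A :=
    sum_congr rfl fun j _ => mul_comm _ _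
  rw [totalWeight, totalWeight, sum_insert hi, hins, hcomm, sum_sub_distrib]
  ring

theorem updateProb_insert_self {i : V} {A : Finset V} (hi : i ∉ A) :
    updateProb f b i (insert i A) = updateProb f b i A := by
  simp only [updateProb, erase_insert hi, erase_eq_of_notMem hi, insert_idem]

theorem exp_totalWeight_mul_updateProb (hf : ∀ i j, f i j = f j i) {i : V} {A : Finset V}
    (hi : i ∉ A) :
    exp (totalWeight f b A) * updateProb f b i A =
      exp (totalWeight f b (insert i A)) * (1 - updateProb f b i (insert i A)) := by
  rw [updateProb_insert_self b hi, updateProb, erase_eq_of_notMem hi]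
  exact exp_mul_logistic (totalWeight_insert b hf hi)

end SpatialCSMA

theorem spatialCSMA_glauber_stationary_general
    {V : Type*} [Fintype V] [DecidableEq V] [Nonempty V]
    (f : V → V → ℝ) (b : V → ℝ) (hf : ∀ i j, f i j = f j i)
    (μ : V → Finset V → ℝ) (hμ : ∀ k S, μ k S = ∏ j ∈ S.erase k, f k j)
    (W : Finset V → ℝ) (hW : ∀ S, W S = ∑ k ∈ S, μ k S * b k)
    (Z : ℝ)
    (Pi : Finset V → ℝ) (hPi : ∀ S, Pi S = exp (W S) / Z)
    (p : V → Finset V → ℝ)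
    (hp : ∀ i M, p i M =
      exp (b i * μ i (insert i M)) /
        (exp (∑ j ∈ M.erase i,
            (b j * μ j (M.erase i) - b j * μ j (M.erase i) * f i j)) +
          exp (b i * μ i (insert i M))))
    (K : Finset V → Finset V → ℝ)
    (hK : ∀ M M', K M M' = (1 / (Fintype.card V : ℝ)) *
      ∑ i ∈ Finset.univ.filter (fun i : V => M'.erase i = M.erase i),
        (if i ∈ M' then p i M else 1 - p i M)) :
    ∀ M' : Finset V, ∑ M : Finset V, Pi M * K M M' = Pi M' := by
  obtain rfl : μ = successProb f := funext₂ hμ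
  obtain rfl : W = totalWeight f b := funext hW
  obtain rfl : p = updateProb f b := funext₂ hp
  obtain rfl : K = glauberKernel (updateProb f b) := funext₂ hK
  refine glauberKernel_stationary fun i A hi => ?_
  rw [hPi, hPi, div_mul_eq_mul_div, div_mul_eq_mul_div, exp_totalWeight_mul_updateProb b hf hi]

/-- Lemma 1 of the paper: for fixed queue lengths, the Spatial CSMA single-site update
is a Glauber dynamics whose stationary distribution is the Gibbs measure
`Π(M) = exp(W M) / Z` with `W M = ∑_{i ∈ M} μ i M * b i`, `μ i M = ∏_{j ∈ M \ {i}} f i j`. -/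
theorem spatialCSMA_glauber_stationary
    {V : Type*} [Fintype V] [DecidableEq V] [Nonempty V]
    (f : V → V → ℝ) (b : V → ℝ) (hf : ∀ i j, f i j = f j i)
    (μ : V → Finset V → ℝ) (hμ : ∀ k S, μ k S = ∏ j ∈ S.erase k, f k j)
    (W : Finset V → ℝ) (hW : ∀ S, W S = ∑ k ∈ S, μ k S * b k)
    (Z : ℝ) (hZ : Z = ∑ S : Finset V, exp (W S))
    (Pi : Finset V → ℝ) (hPi : ∀ S, Pi S = exp (W S) / Z)
    (p : V → Finset V → ℝ)
    (hp : ∀ i M, p i M =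
      exp (b i * μ i (insert i M)) /
        (exp (∑ j ∈ M.erase i,
            (b j * μ j (M.erase i) - b j * μ j (M.erase i) * f i j)) +
          exp (b i * μ i (insert i M))))
    (K : Finset V → Finset V → ℝ)
    (hK : ∀ M M', K M M' = (1 / (Fintype.card V : ℝ)) *
      ∑ i ∈ Finset.univ.filter (fun i : V => M'.erase i = M.erase i),
        (if i ∈ M' then p i M else 1 - p i M)) :
    ∀ M' : Finset V, ∑ M : Finset V, Pi M * K M M' = Pi M' :=
  spatialCSMA_glauber_stationary_general f b hf μ hμ W hW Z Pi hPi p hp K hK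
end

section
/- Let V be a finite set, N : V → Finset V with i ∉ N i and j ∈ N i ↔ i ∈ N j for all i, j ∈ V, f : V → V → ℝ symmetric with f i j = 1 whenever j ∉ N i, and b : V → ℝ. For i ∈ V and M ⊆ V define μ_i(M) = ∏_{j ∈ M \ {i}} f i j and W(M) = Σ_{i ∈ M} μ_i(M) · b_i. Define N_G(i) = ( N i ∪ ⋃_{j ∈ N i} N j ) \ {i}. Let D ⊆ V satisfy N_G(i) ∩ D = ∅ for every i ∈ D. Then for every B ⊆ V \ D and every A ⊆ D, W(B ∪ A) − W(B) = Σ_{i ∈ A} ( W(B ∪ {i}) − W(B) ). -/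
open Finset Real

/-- Additive decomposition of the weight over a decision schedule (key step in the proof
of Lemma 3 on parallel updates): if `D` is a decision schedule, i.e. `N_G(i) ∩ D = ∅`
for every `i ∈ D`, then for `B ⊆ V \ D` and `A ⊆ D`,
`W(B ∪ A) − W(B) = ∑_{i ∈ A} (W(B ∪ {i}) − W(B))`. -/
theorem spatialCSMA_weight_additive_on_decision_schedule
    {V : Type*} [Fintype V] [DecidableEq V]
    (N : V → Finset V) (hN_irrefl : ∀ i, i ∉ N i)
    (hN_symm : ∀ i j, j ∈ N i ↔ i ∈ N j)
    (f : V → V → ℝ) (hf : ∀ i j, f i j = f j i)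
    (hf_one : ∀ i j, j ∉ N i → f i j = 1)
    (b : V → ℝ)
    (μ : V → Finset V → ℝ) (hμ : ∀ k S, μ k S = ∏ j ∈ S.erase k, f k j)
    (W : Finset V → ℝ) (hW : ∀ S, W S = ∑ k ∈ S, μ k S * b k)
    (NG : V → Finset V) (hNG : ∀ i, NG i = (N i ∪ (N i).biUnion N).erase i)
    (D : Finset V) (hD : ∀ i ∈ D, NG i ∩ D = ∅) :
    ∀ B ⊆ Finset.univ \ D, ∀ A ⊆ D,
      W (B ∪ A) - W B = ∑ i ∈ A, (W (B ∪ {i}) - W B) := by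
  intro B hB
  have hBD : ∀ x ∈ B, x ∉ D := fun x hx => (Finset.mem_sdiff.mp (hB hx)).2
  -- generic one-step difference formula
  have diff : ∀ (S : Finset V) (a : V), a ∉ S →
      W (insert a S) - W S
        = (∏ j ∈ S, f a j) * b a + ∑ k ∈ S, (f k a - 1) * (μ k S * b k) := by
    intro S a haS
    rw [hW, hW, Finset.sum_insert haS, hμ, Finset.erase_insert haS]
    have hterm : ∀ k ∈ S, μ k (insert a S) * b k
        = μ k S * b k + (f k a - 1) * (μ k S * b k) := by
      intro k hk
      have hka : a ≠ k := fun h => haS (h ▸ hk)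
      rw [hμ, hμ, Finset.erase_insert_of_ne hka,
        Finset.prod_insert (fun h => haS (Finset.mem_of_mem_erase h))]
      ring
    rw [Finset.sum_congr rfl hterm, Finset.sum_add_distrib]
    ring
  -- a vertex in a decision schedule does not interact with other schedule members
  have hnotNG : ∀ a ∈ D, ∀ j ∈ D, j ≠ a → j ∉ NG a := by
    intro a haD j hjD hja hmem
    have : j ∈ NG a ∩ D := Finset.mem_inter.mpr ⟨hmem, hjD⟩
    rw [hD a haD] at this
    exact absurd this (Finset.notMem_empty j)
  have step : ∀ A' ⊆ D, ∀ a ∈ D, a ∉ A' →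
      W (insert a (B ∪ A')) - W (B ∪ A') = W (insert a B) - W B := by
    intro A' hA' a haD haA'
    have haB : a ∉ B := fun h => hBD a h haD
    have haBA : a ∉ B ∪ A' := by simp [haB, haA']
    have hdisj : Disjoint B A' := Finset.disjoint_left.mpr
      (fun x hx hx' => hBD x hx (hA' hx'))
    -- elements of A' are not neighbours of a
    have hAone : ∀ j ∈ A', f a j = 1 := by
      intro j hj
      refine hf_one a j (fun hjN => ?_)
      have hja : j ≠ a := fun h => haA' (h ▸ hj)
      exact hnotNG a haD j (hA' hj) hja
        (by rw [hNG]; exact Finset.mem_erase.mpr ⟨hja, Finset.mem_union_left _ hjN⟩)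
    rw [diff _ _ haBA, diff _ _ haB]
    have hprod : ∏ j ∈ B ∪ A', f a j = ∏ j ∈ B, f a j := by
      rw [Finset.prod_union hdisj, Finset.prod_eq_one hAone, mul_one]
    have hsum : ∑ k ∈ B ∪ A', (f k a - 1) * (μ k (B ∪ A') * b k)
        = ∑ k ∈ B, (f k a - 1) * (μ k B * b k) := by
      rw [Finset.sum_union hdisj]
      have hA0 : ∑ k ∈ A', (f k a - 1) * (μ k (B ∪ A') * b k) = 0 := by
        refine Finset.sum_eq_zero (fun k hk => ?_)
        have : f k a = 1 := by rw [hf]; exact hAone k hk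
        rw [this]; ring
      rw [hA0, add_zero]
      refine Finset.sum_congr rfl (fun k hk => ?_)
      by_cases h1 : f k a = 1
      · rw [h1]; ring
      · have hkNa : k ∈ N a := by
          by_contra hkn
          exact h1 (by rw [hf]; exact hf_one a k hkn)
        have hkA' : k ∉ A' := fun h => hBD k hk (hA' h)
        have hμeq : μ k (B ∪ A') = μ k B := by
          rw [hμ, hμ, Finset.erase_union_distrib, Finset.erase_eq_of_notMem hkA',
            Finset.prod_union (Finset.disjoint_of_subset_left (Finset.erase_subset _ _) hdisj)]
          have : ∀ j ∈ A', f k j = 1 := by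
            intro j hj
            refine hf_one k j (fun hjN => ?_)
            have hja : j ≠ a := fun h => haA' (h ▸ hj)
            refine hnotNG a haD j (hA' hj) hja ?_
            rw [hNG]
            exact Finset.mem_erase.mpr ⟨hja, Finset.mem_union_right _
              (Finset.mem_biUnion.mpr ⟨k, hkNa, hjN⟩)⟩
          rw [Finset.prod_eq_one this, mul_one]
        rw [hμeq]
    rw [hprod, hsum]
  intro A
  induction A using Finset.induction_on with
  | empty => intro _; simp
  | @insert a s ha ih =>
    intro hsub
    have hsD : s ⊆ D := fun x hx => hsub (Finset.mem_insert_of_mem hx)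
    have haD : a ∈ D := hsub (Finset.mem_insert_self a s)
    have h1 := step s hsD a haD ha
    have h2 := ih hsD
    rw [Finset.sum_insert ha, Finset.union_insert, show B ∪ {a} = insert a B from by ext x; simp [or_comm]]
    linarith
end
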